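/- arXiv:2507.18120 — 3 statements merged into one kernel-verified Lean document; each statement's English description precedes it below -/
import Mathlib

section
/- Let G be a simple graph, x a vertex with neighborhood N₁ and second neighborhood N₂ (vertices at distance exactly 2 from x). Let X, X̄ partition N₁, let ε ∈ ℝ, and let f be the function with f(x)=0, f = ε on X, f = 1 on X̄, and f(z) = 2(ε·d_X(z) + d_{X̄}(z))/d_{N₁}(z) for z ∈ N₂ (where d_S(z) is the number of neighbors of z in S and d_{N₁}(z) > 0 for z ∈ N₂). Then for each z ∈ N₂, ∑_{y ∈ N₁, y ∼ z} [ (1/4)(f(z)−f(y))² − (1/2)(f(z)−f(y))(f(y)−f(x)) ] = −(ε·d_X(z) + d_{X̄}(z))²/d_{N₁}(z) + (3/4)(ε²·d_X(z) + d_{X̄}(z)). -/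
/-!
Only the values `ε` (on the `d_X(z)` neighbours in `X`) and `1` (on the `d_X̄(z)` neighbours in `X̄`)
enter the sum, so with `a = d_X(z)`, `b = d_X̄(z)`, `s = ε a + b`, `q = ε² a + b` and `t = f z` it
equals `(a + b) t² / 4 - t s + 3 q / 4`. At `t = 2 s / (a + b)` the first two terms combine to
`-s² / (a + b)`.
-/

open Finset

theorem Finset.sum_union_comp_of_eqOn_const {α β M : Type*} [DecidableEq α] [AddCommMonoid M]
    {A B : Finset α} (hAB : Disjoint A B) {g : α → β} {c d : β}
    (hA : ∀ y ∈ A, g y = c) (hB : ∀ y ∈ B, g y = d) (φ : β → M) :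
    ∑ y ∈ A ∪ B, φ (g y) = #A • φ c + #B • φ d := by
  rw [sum_union hAB, sum_congr rfl fun y hy => congrArg φ (hA y hy),
    sum_congr rfl fun y hy => congrArg φ (hB y hy), sum_const, sum_const]

/-- Also true for `n = 0`, where both sides are `0` since `2 * s / 0 = 0` and `s ^ 2 / 0 = 0`. -/
theorem div_mul_two_mul_div_sq_sub (n s : ℝ) :
    n / 4 * (2 * s / n) ^ 2 - 2 * s / n * s = -s ^ 2 / n := by
  rcases eq_or_ne n 0 with rfl | hn
  · simp
  · field_simp
    ring

theorem two_valued_energy_eq {a b ε t : ℝ} (ht : t = 2 * (ε * a + b) / (a + b)) :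
    a * (1 / 4 * (t - ε) ^ 2 - 1 / 2 * (t - ε) * ε)
        + b * (1 / 4 * (t - 1) ^ 2 - 1 / 2 * (t - 1) * 1)
      = -(ε * a + b) ^ 2 / (a + b) + 3 / 4 * (ε ^ 2 * a + b) :=
  calc _ = (a + b) / 4 * t ^ 2 - t * (ε * a + b) + 3 / 4 * (ε ^ 2 * a + b) := by ring
    _ = _ := by rw [ht, div_mul_two_mul_div_sq_sub]

theorem stmt2_general {V : Type*} [DecidableEq V] (G : SimpleGraph V) [G.LocallyFinite]
    (x : V) (X Xbar : Finset V)
    (hpart : X ∪ Xbar = G.neighborFinset x) (hdisj : Disjoint X Xbar)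
    (ε : ℝ) (f : V → ℝ)
    (hfx : f x = 0) (hfX : ∀ z ∈ X, f z = ε) (hfXbar : ∀ z ∈ Xbar, f z = 1)
    (z : V)
    (hfz : f z = 2 * (ε * ((G.neighborFinset z ∩ X).card : ℝ)
        + ((G.neighborFinset z ∩ Xbar).card : ℝ))
      / ((G.neighborFinset z ∩ G.neighborFinset x).card : ℝ)) :
    ∑ y ∈ G.neighborFinset z ∩ G.neighborFinset x,
        ((1 / 4) * (f z - f y) ^ 2 - (1 / 2) * (f z - f y) * (f y - f x))
      = - (ε * ((G.neighborFinset z ∩ X).card : ℝ)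
            + ((G.neighborFinset z ∩ Xbar).card : ℝ)) ^ 2
          / ((G.neighborFinset z ∩ G.neighborFinset x).card : ℝ)
        + (3 / 4) * (ε ^ 2 * ((G.neighborFinset z ∩ X).card : ℝ)
            + ((G.neighborFinset z ∩ Xbar).card : ℝ)) := by
  have hsplit : G.neighborFinset z ∩ G.neighborFinset x
      = (G.neighborFinset z ∩ X) ∪ (G.neighborFinset z ∩ Xbar) := by
    rw [← hpart, inter_union_distrib_left]
  have hdisj' : Disjoint (G.neighborFinset z ∩ X) (G.neighborFinset z ∩ Xbar) :=
    hdisj.mono inter_subset_right inter_subset_right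
  have hcard : (#(G.neighborFinset z ∩ G.neighborFinset x) : ℝ)
      = #(G.neighborFinset z ∩ X) + #(G.neighborFinset z ∩ Xbar) := by
    rw [hsplit, card_union_of_disjoint hdisj', Nat.cast_add]
  rw [hcard] at hfz ⊢
  simp only [hfx, sub_zero]
  rw [hsplit, sum_union_comp_of_eqOn_const hdisj'
      (fun y hy => hfX y (mem_of_mem_inter_right hy))
      (fun y hy => hfXbar y (mem_of_mem_inter_right hy))
      (fun u => 1 / 4 * (f z - u) ^ 2 - 1 / 2 * (f z - u) * u),
    nsmul_eq_mul, nsmul_eq_mul]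
  exact two_valued_energy_eq hfz

theorem stmt2 {V : Type*} [DecidableEq V] (G : SimpleGraph V) [G.LocallyFinite]
    (x : V) (X Xbar : Finset V)
    (hpart : X ∪ Xbar = G.neighborFinset x) (hdisj : Disjoint X Xbar)
    (ε : ℝ) (f : V → ℝ)
    (hfx : f x = 0) (hfX : ∀ z ∈ X, f z = ε) (hfXbar : ∀ z ∈ Xbar, f z = 1)
    (z : V) (hzx : z ≠ x) (hznadj : ¬ G.Adj x z)
    (hz2 : (G.neighborFinset z ∩ G.neighborFinset x).Nonempty)
    (hfz : f z = 2 * (ε * ((G.neighborFinset z ∩ X).card : ℝ)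
        + ((G.neighborFinset z ∩ Xbar).card : ℝ))
      / ((G.neighborFinset z ∩ G.neighborFinset x).card : ℝ)) :
    ∑ y ∈ G.neighborFinset z ∩ G.neighborFinset x,
        ((1 / 4) * (f z - f y) ^ 2 - (1 / 2) * (f z - f y) * (f y - f x))
      = - (ε * ((G.neighborFinset z ∩ X).card : ℝ)
            + ((G.neighborFinset z ∩ Xbar).card : ℝ)) ^ 2
          / ((G.neighborFinset z ∩ G.neighborFinset x).card : ℝ)
        + (3 / 4) * (ε ^ 2 * ((G.neighborFinset z ∩ X).card : ℝ)
            + ((G.neighborFinset z ∩ Xbar).card : ℝ)) :=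
  stmt2_general G x X Xbar hpart hdisj ε f hfx hfX hfXbar z hfz
end

section
/- Let G be a connected simple graph and let (L, R) be a partition of the vertex set realizing the edge-connectivity κ′ of G, i.e., e(L,R) = κ′ with L, R nonempty. Suppose x ∈ L maximizes d_R(x) among all vertices' cross-degrees, and set X̄ = N₁(x) ∩ R. Then for every y ∈ X̄, the number of neighbors of y at distance two from x is at least δ − 2|X̄| + 1, where δ is the minimum degree of G. Consequently e(X̄, N₂(x)) ≥ |X̄|(δ − 2|X̄| + 1). -/
open Finset

open scoped Classical in
theorem stmt4 {V : Type*} (G : SimpleGraph V) [G.LocallyFinite]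
    (δ : ℕ) (hδ : ∀ v, δ ≤ G.degree v) (hconn : G.Connected)
    (L : Set V) (x : V) (hx : x ∈ L)
    (hmaxR : ∀ y, y ∉ L →
      ((G.neighborFinset y).filter (· ∈ L)).card ≤ ((G.neighborFinset x).filter (· ∉ L)).card)
    (hmaxL : ∀ z ∈ L,
      ((G.neighborFinset z).filter (· ∉ L)).card ≤ ((G.neighborFinset x).filter (· ∉ L)).card) :
    (∀ y ∈ (G.neighborFinset x).filter (· ∉ L),
      (δ : ℤ) - 2 * ((G.neighborFinset x).filter (· ∉ L)).card + 1
        ≤ (((G.neighborFinset y).filter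
            (fun z => z ≠ x ∧ ¬ G.Adj x z ∧ ∃ w, G.Adj x w ∧ G.Adj w z)).card : ℤ)) ∧
    ((((G.neighborFinset x).filter (· ∉ L)).card : ℤ)
        * ((δ : ℤ) - 2 * ((G.neighborFinset x).filter (· ∉ L)).card + 1)
      ≤ ∑ y ∈ (G.neighborFinset x).filter (· ∉ L),
          ((((G.neighborFinset y).filter
              (fun z => z ≠ x ∧ ¬ G.Adj x z ∧ ∃ w, G.Adj x w ∧ G.Adj w z)).card : ℤ))) := by
  classical
  set X := (G.neighborFinset x).filter (· ∉ L) with hX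
  have key : ∀ y ∈ X, (δ : ℤ) - 2 * X.card + 1 ≤ (((G.neighborFinset y).filter
            (fun z => z ≠ x ∧ ¬ G.Adj x z ∧ ∃ w, G.Adj x w ∧ G.Adj w z)).card : ℤ) := by
    intro y hy
    have hy' := hy
    rw [hX, mem_filter, SimpleGraph.mem_neighborFinset] at hy'
    obtain ⟨hxy, hyL⟩ := hy'
    set S := (G.neighborFinset y).filter
      (fun z => z ≠ x ∧ ¬ G.Adj x z ∧ ∃ w, G.Adj x w ∧ G.Adj w z) with hS
    set M := (G.neighborFinset y).filter (fun z => G.Adj x z ∧ z ∉ L) with hM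
    set P := (G.neighborFinset y).filter (fun z => G.Adj x z ∧ z ∈ L) with hP
    have hsplit : G.neighborFinset y ⊆ S ∪ ({x} ∪ M ∪ P) := by
      intro z hz
      have hadj : G.Adj y z := (SimpleGraph.mem_neighborFinset ..).1 hz
      by_cases h1 : z = x
      · exact mem_union_right _ (mem_union_left _ (mem_union_left _ (by simp [h1])))
      by_cases h2 : G.Adj x z
      · by_cases h3 : z ∈ L
        · exact mem_union_right _ (mem_union_right _ (mem_filter.2 ⟨hz, h2, h3⟩))
        · exact mem_union_right _ (mem_union_left _ (mem_union_right _
            (mem_filter.2 ⟨hz, h2, h3⟩)))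
      · exact mem_union_left _ (mem_filter.2 ⟨hz, h1, h2, y, hxy, hadj⟩)
    have hd : δ ≤ (G.neighborFinset y).card := by
      exact hδ y
    have hcard : (G.neighborFinset y).card ≤ S.card + (1 + M.card + P.card) := by
      calc (G.neighborFinset y).card ≤ (S ∪ ({x} ∪ M ∪ P)).card := card_le_card hsplit
        _ ≤ S.card + ({x} ∪ M ∪ P).card := card_union_le _ _
        _ ≤ S.card + (({x} ∪ M).card + P.card) := by
            exact Nat.add_le_add_left (card_union_le _ _) _
        _ ≤ S.card + ((1 + M.card) + P.card) := by
            exact Nat.add_le_add_left (Nat.add_le_add_right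
              (le_trans (card_union_le _ _) (by simp)) _) _
        _ = S.card + (1 + M.card + P.card) := by ring
    have hM1 : M.card + 1 ≤ X.card := by
      have hsub : insert y M ⊆ X := by
        intro z hz
        rcases mem_insert.1 hz with rfl | hz
        · exact hy
        · rw [hM, mem_filter] at hz
          exact mem_filter.2 ⟨(SimpleGraph.mem_neighborFinset ..).2 hz.2.1, hz.2.2⟩
      have hyM : y ∉ M := by
        intro h
        exact G.irrefl ((SimpleGraph.mem_neighborFinset ..).1 (mem_filter.1 h).1)
      calc M.card + 1 = (insert y M).card := (card_insert_of_notMem hyM).symm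
        _ ≤ X.card := card_le_card hsub
    have hP1 : P.card + 1 ≤ X.card := by
      have hsub : insert x P ⊆ (G.neighborFinset y).filter (· ∈ L) := by
        intro z hz
        rcases mem_insert.1 hz with rfl | hz
        · exact mem_filter.2 ⟨(SimpleGraph.mem_neighborFinset ..).2 hxy.symm, hx⟩
        · rw [hP, mem_filter] at hz
          exact mem_filter.2 ⟨hz.1, hz.2.2⟩
      have hxP : x ∉ P := by
        intro h
        exact G.irrefl (mem_filter.1 h).2.1
      calc P.card + 1 = (insert x P).card := (card_insert_of_notMem hxP).symm
        _ ≤ ((G.neighborFinset y).filter (· ∈ L)).card := card_le_card hsub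
        _ ≤ X.card := hmaxR y hyL
    have h1 : (δ : ℤ) ≤ (S.card : ℤ) + (1 + M.card + P.card) := by
      exact_mod_cast le_trans hd hcard
    have h2 : (M.card : ℤ) + 1 ≤ X.card := by exact_mod_cast hM1
    have h3 : (P.card : ℤ) + 1 ≤ X.card := by exact_mod_cast hP1
    linarith
  refine ⟨key, ?_⟩
  calc (X.card : ℤ) * ((δ : ℤ) - 2 * X.card + 1)
      = ∑ _y ∈ X, ((δ : ℤ) - 2 * X.card + 1) := by
        rw [Finset.sum_const, nsmul_eq_mul]
    _ ≤ ∑ y ∈ X, (((G.neighborFinset y).filter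
          (fun z => z ≠ x ∧ ¬ G.Adj x z ∧ ∃ w, G.Adj x w ∧ G.Adj w z)).card : ℤ) :=
        Finset.sum_le_sum key
end

section
/- Let G be an amply regular graph with parameters (d, α, β). Let (L,R) be a vertex partition and suppose m is an upper bound on the cross-degree, i.e., d_R(z) ≤ m for all z ∈ L and d_L(z) ≤ m for all z ∈ R. Then every vertex z with at least one neighbor on the opposite side satisfies d_{L,R}(z) ≥ α + 2 − m. -/
open Finset
open scoped Classical

/-- An amply regular graph with parameters `(d, α, β)`. -/
def SimpleGraph.IsAmplyRegular {V : Type*} (G : SimpleGraph V) [G.LocallyFinite]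
    (d α β : ℕ) : Prop :=
  G.IsRegularOfDegree d ∧
  (∃ u v, u ≠ v ∧ ¬ G.Adj u v) ∧ (∃ u v, G.Adj u v) ∧
  (∀ u v, G.Adj u v → (G.neighborFinset u ∩ G.neighborFinset v).card = α) ∧
  (∀ u v, u ≠ v → ¬ G.Adj u v → (G.neighborFinset u ∩ G.neighborFinset v).Nonempty →
    (G.neighborFinset u ∩ G.neighborFinset v).card = β)

/-- The number of neighbors of `z` on the opposite side of the partition `(L, Lᶜ)`. -/
noncomputable def dLR {V : Type*} (G : SimpleGraph V) [G.LocallyFinite] (L : Set V)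
    (z : V) : ℕ :=
  if z ∈ L then ((G.neighborFinset z).filter (· ∉ L)).card
  else ((G.neighborFinset z).filter (· ∈ L)).card

private lemma key_count {V : Type*} (G : SimpleGraph V) [G.LocallyFinite]
    {α : ℕ} {z z' : V} (hzz : G.Adj z z') (P : V → Prop) [DecidablePred P]
    (hz : ¬ P z) (hz' : P z')
    (hα : (G.neighborFinset z ∩ G.neighborFinset z').card = α) :
    α + 2 ≤ ((G.neighborFinset z).filter P).card
      + ((G.neighborFinset z').filter (fun w => ¬ P w)).card := by
  set C := G.neighborFinset z ∩ G.neighborFinset z' with hC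
  have hsplit : (C.filter P).card + (C.filter (fun w => ¬ P w)).card = α := by
    rw [← hα]; exact Finset.card_filter_add_card_filter_not P
  have hz'C : z' ∉ C.filter P := by
    simp only [hC, Finset.mem_filter, Finset.mem_inter, SimpleGraph.mem_neighborFinset]
    intro h
    exact G.irrefl h.1.2
  have hzC : z ∉ C.filter (fun w => ¬ P w) := by
    simp only [hC, Finset.mem_filter, Finset.mem_inter, SimpleGraph.mem_neighborFinset]
    intro h
    exact G.irrefl h.1.1
  have h1 : insert z' (C.filter P) ⊆ (G.neighborFinset z).filter P := by
    intro w hw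
    rcases Finset.mem_insert.mp hw with rfl | hw
    · exact Finset.mem_filter.mpr ⟨(SimpleGraph.mem_neighborFinset G z w).mpr hzz, hz'⟩
    · rcases Finset.mem_filter.mp hw with ⟨hwC, hwP⟩
      exact Finset.mem_filter.mpr ⟨(Finset.mem_inter.mp hwC).1, hwP⟩
  have h2 : insert z (C.filter (fun w => ¬ P w))
      ⊆ (G.neighborFinset z').filter (fun w => ¬ P w) := by
    intro w hw
    rcases Finset.mem_insert.mp hw with rfl | hw
    · exact Finset.mem_filter.mpr
        ⟨(SimpleGraph.mem_neighborFinset G z' w).mpr hzz.symm, hz⟩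
    · rcases Finset.mem_filter.mp hw with ⟨hwC, hwP⟩
      exact Finset.mem_filter.mpr ⟨(Finset.mem_inter.mp hwC).2, hwP⟩
  have c1 := Finset.card_le_card h1
  have c2 := Finset.card_le_card h2
  rw [Finset.card_insert_of_notMem hz'C] at c1
  rw [Finset.card_insert_of_notMem hzC] at c2
  omega

theorem stmt12 {V : Type*} (G : SimpleGraph V) [G.LocallyFinite]
    (d α β : ℕ) (hAR : G.IsAmplyRegular d α β)
    (L : Set V) (m : ℕ) (hm : ∀ z, dLR G L z ≤ m) :
    ∀ z, 1 ≤ dLR G L z → (α : ℤ) + 2 - m ≤ (dLR G L z : ℤ) := by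
  intro z hz1
  obtain ⟨-, -, -, hcommon, -⟩ := hAR
  by_cases hzL : z ∈ L
  · have hdz : dLR G L z = ((G.neighborFinset z).filter (· ∉ L)).card := by
      simp [dLR, hzL]
    rw [hdz] at hz1 ⊢
    obtain ⟨z', hz'⟩ := Finset.card_pos.mp hz1
    rcases Finset.mem_filter.mp hz' with ⟨hz'N, hz'L⟩
    have hadj : G.Adj z z' := (SimpleGraph.mem_neighborFinset G z z').mp hz'N
    have hkey := key_count G hadj (· ∉ L) (not_not.mpr hzL) hz'L
      (hcommon z z' hadj)
    have hz'eq : ((G.neighborFinset z').filter (fun w => ¬ w ∉ L)).card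
        = dLR G L z' := by
      have : z' ∉ L := hz'L
      simp [dLR, this, not_not]
    rw [hz'eq] at hkey
    have := hm z'
    omega
  · have hdz : dLR G L z = ((G.neighborFinset z).filter (· ∈ L)).card := by
      simp [dLR, hzL]
    rw [hdz] at hz1 ⊢
    obtain ⟨z', hz'⟩ := Finset.card_pos.mp hz1
    rcases Finset.mem_filter.mp hz' with ⟨hz'N, hz'L⟩
    have hadj : G.Adj z z' := (SimpleGraph.mem_neighborFinset G z z').mp hz'N
    have hkey := key_count G hadj (· ∈ L) hzL hz'L (hcommon z z' hadj)
    have hz'eq : ((G.neighborFinset z').filter (fun w => ¬ w ∈ L)).card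
        = dLR G L z' := by
      simp [dLR, hz'L]
    rw [hz'eq] at hkey
    have := hm z'
    omega
end
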